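/- If η ~ HG(n,s,s) and ξ ~ Bin(s, s/n), then E[f(η)] ≤ E[f(ξ)] for every continuous convex function f: ℝ → ℝ; in particular E[exp(λη)] ≤ E[exp(λξ)] for all real λ. -/

import Mathlib

/-!
Hoeffding's coupling. Draw `y : ι → α` uniformly and then a permutation `π` uniformly among
those with `range y ⊆ π(A)`. The resulting `π` is uniform, and given `π` the law of `y` is
invariant under the permutations preserving `π(A)`, so every coordinate `y t` is uniform on
`π(A)`; hence the conditional mean of `#{t | y t ∈ B}` is `#(π(A) ∩ B)`. Jensen's inequality
for the conditional law gives `E f(#(π(A) ∩ B)) ≤ E f(#{t | y t ∈ B})`, and the count on the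
right is binomial.
-/

open Finset Equiv

theorem ConvexOn.mul_sum_comp_le_sum_comp_of_mean {ι κ : Type*} {D : Set ℝ} {f : ℝ → ℝ}
    (hf : ConvexOn ℝ D f) {s : Finset ι} {t : Finset κ} {w : ι → κ → ℝ} {c : ℝ}
    {g : κ → ℝ} {h : ι → ℝ} (hc : 0 < c) (hw : ∀ i ∈ s, ∀ j ∈ t, 0 ≤ w i j)
    (hrow : ∀ i ∈ s, ∑ j ∈ t, w i j = c) (hcol : ∀ j ∈ t, ∑ i ∈ s, w i j = 1)
    (hmean : ∀ i ∈ s, ∑ j ∈ t, w i j * g j = c * h i) (hg : ∀ j ∈ t, g j ∈ D) :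
    c * ∑ i ∈ s, f (h i) ≤ ∑ j ∈ t, f (g j) := by
  have hjensen : ∀ i ∈ s, c * f (h i) ≤ ∑ j ∈ t, w i j * f (g j) := by
    intro i hi
    have := hf.map_sum_le (w := fun j => w i j / c) (fun j hj => div_nonneg (hw i hi j hj) hc.le)
      (by rw [← sum_div, hrow i hi, div_self hc.ne']) hg
    simp only [smul_eq_mul, div_mul_eq_mul_div, ← sum_div, hmean i hi,
      mul_div_cancel_left₀ _ hc.ne'] at this
    rwa [le_div_iff₀' hc] at this
  calc c * ∑ i ∈ s, f (h i) = ∑ i ∈ s, c * f (h i) := mul_sum _ _ _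
    _ ≤ ∑ i ∈ s, ∑ j ∈ t, w i j * f (g j) := sum_le_sum hjensen
    _ = ∑ j ∈ t, f (g j) := by
      rw [sum_comm]
      exact sum_congr rfl fun j hj => by rw [← sum_mul, hcol j hj, one_mul]

theorem Finset.apply_eq_sum_div_card {α : Type*} [Fintype α] {S : Finset α} {p : α → ℝ}
    (hsupp : ∀ x ∉ S, p x = 0) (hconst : ∀ x ∈ S, ∀ x' ∈ S, p x = p x') {x : α} (hx : x ∈ S) :
    p x = (∑ x', p x') / #S := by
  rw [← sum_subset (subset_univ S) fun x' _ h => hsupp x' h,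
    sum_congr rfl fun x' hx' => hconst x' hx' x hx, sum_const, nsmul_eq_mul,
    mul_div_cancel_left₀ _ (Nat.cast_ne_zero.2 (card_ne_zero_of_mem hx))]

theorem Finset.image_swap_of_mem {α : Type*} [DecidableEq α] {S : Finset α} {x x' : α}
    (hx : x ∈ S) (hx' : x' ∈ S) : S.image (swap x x') = S := by
  refine eq_of_subset_of_card_le (image_subset_iff.2 fun a ha => ?_)
    (card_image_of_injective _ (swap x x').injective).ge
  rw [swap_apply_def]
  split_ifs <;> assumption

theorem Finset.exists_perm_image_eq {α : Type*} [DecidableEq α] {S T : Finset α}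
    (h : #S = #T) : ∃ σ : Perm α, S.image σ = T := by
  obtain ⟨σ, hσ⟩ := (Set.powersetCard.isPretransitive (α := α) (n := #T)).exists_smul_eq
    ⟨S, h⟩ ⟨T, rfl⟩
  exact ⟨σ, congrArg Subtype.val hσ⟩

section Coupling

variable {α ι : Type*} [Fintype α] [DecidableEq α] [Fintype ι]

def coveringPerms (A : Finset α) (y : ι → α) : Finset (Perm α) :=
  {π | ∀ t, y t ∈ A.image π}

/-- The coupling gives the pair `(π, y)` probability
`coverWeight A (A.image π) y / (card α) ^ (card ι)`: the mass of `y` is spread uniformly over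
`coveringPerms A y`. -/
noncomputable def coverWeight (A S : Finset α) (y : ι → α) : ℝ :=
  if ∀ t, y t ∈ S then (#(coveringPerms A y) : ℝ)⁻¹ else 0

variable {A S : Finset α}

theorem card_coveringPerms_comp (σ : Perm α) (y : ι → α) :
    #(coveringPerms A (σ ∘ y)) = #(coveringPerms A y) := by
  refine (card_equiv (Equiv.mulLeft σ) fun π => ?_).symm
  simp [coveringPerms, mem_image]

theorem coveringPerms_nonempty (hA : #A = Fintype.card ι) (y : ι → α) :
    (coveringPerms A y).Nonempty := by
  obtain ⟨T, hyT, -, hT⟩ := exists_subsuperset_card_eq (subset_univ (univ.image y))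
    (card_image_le.trans_eq hA.symm) (card_le_univ A)
  obtain ⟨π, hπ⟩ := exists_perm_image_eq hT.symm
  exact ⟨π, mem_filter.2 ⟨mem_univ π, fun t => hπ ▸ hyT (mem_image_of_mem y (mem_univ t))⟩⟩

theorem coverWeight_nonneg (y : ι → α) : 0 ≤ coverWeight A S y := by
  unfold coverWeight
  split_ifs <;> positivity

theorem coverWeight_image_comp (σ : Perm α) (y : ι → α) :
    coverWeight A (S.image σ) (σ ∘ y) = coverWeight A S y := by
  simp [coverWeight, card_coveringPerms_comp, σ.injective.mem_finset_image]

theorem sum_perm_coverWeight (hA : #A = Fintype.card ι) (y : ι → α) :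
    ∑ π : Perm α, coverWeight A (A.image π) y = 1 := by
  have hne := (Nat.cast_ne_zero (R := ℝ)).2 (coveringPerms_nonempty hA y).card_pos.ne'
  rw [← mul_inv_cancel₀ hne, ← nsmul_eq_mul, ← sum_const]
  exact (sum_filter _ _).symm

variable [DecidableEq ι]

theorem sum_coverWeight_image (π : Perm α) :
    ∑ y : ι → α, coverWeight A (A.image π) y = ∑ y : ι → α, coverWeight A A y :=
  (Fintype.sum_equiv (piCongrRight fun _ : ι => π) _ _
    fun y => (coverWeight_image_comp π y).symm).symm

theorem factorial_mul_sum_coverWeight (hA : #A = Fintype.card ι) :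
    ((Fintype.card α).factorial : ℝ) * ∑ y : ι → α, coverWeight A A y
      = (Fintype.card α : ℝ) ^ Fintype.card ι := by
  calc ((Fintype.card α).factorial : ℝ) * ∑ y : ι → α, coverWeight A A y
      = ∑ π : Perm α, ∑ y : ι → α, coverWeight A (A.image π) y := by
        simp [sum_coverWeight_image, Fintype.card_perm]
    _ = ∑ y : ι → α, ∑ π : Perm α, coverWeight A (A.image π) y := sum_comm
    _ = (Fintype.card α : ℝ) ^ Fintype.card ι := by
        simp [sum_perm_coverWeight hA]

theorem sum_coverWeight_ite_eq_of_mem (t : ι) {x x' : α} (hx : x ∈ S) (hx' : x' ∈ S) :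
    ∑ y : ι → α, (if y t = x then coverWeight A S y else 0)
      = ∑ y : ι → α, (if y t = x' then coverWeight A S y else 0) := by
  refine Fintype.sum_equiv (piCongrRight fun _ : ι => swap x x') _ _ fun y => ?_
  have hw := coverWeight_image_comp (A := A) (S := S) (swap x x') y
  rw [image_swap_of_mem hx hx'] at hw
  change _ = ite (swap x x' (y t) = x') (coverWeight A S (swap x x' ∘ y)) 0
  simp [hw, swap_apply_eq_iff]

theorem sum_coverWeight_mul_card_filter_mem (hS : #S = Fintype.card ι) (B : Finset α) :
    ∑ y : ι → α, coverWeight A S y * #{t | y t ∈ B}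
      = #(S ∩ B) * ∑ y : ι → α, coverWeight A S y := by
  set c := ∑ y : ι → α, coverWeight A S y
  have hmarginal (t : ι) (x : α) :
      ∑ y : ι → α, (if y t = x then coverWeight A S y else 0) = if x ∈ S then c / #S else 0 := by
    have hsupp : ∀ x ∉ S, ∑ y : ι → α, (if y t = x then coverWeight A S y else 0) = 0 :=
      fun x hx => sum_eq_zero fun y _ => by
        split_ifs with h
        · exact if_neg fun hyS => hx (h ▸ hyS t)
        · rfl
    split_ifs with hx
    · rw [apply_eq_sum_div_card hsupp
        (fun x hx x' hx' => sum_coverWeight_ite_eq_of_mem t hx hx') hx, sum_comm]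
      simp [c]
    · exact hsupp x hx
  calc ∑ y : ι → α, coverWeight A S y * #{t | y t ∈ B}
      = ∑ t : ι, ∑ x ∈ B, ∑ y : ι → α, (if y t = x then coverWeight A S y else 0) := by
        simp only [natCast_card_filter, mul_sum, mul_ite, mul_one, mul_zero]
        rw [sum_comm]
        refine sum_congr rfl fun t _ => ?_
        rw [sum_comm]
        simp [sum_ite_eq]
    _ = ∑ t : ι, #(S ∩ B) * (c / #S) := by
        simp only [hmarginal, sum_ite_mem, sum_const, nsmul_eq_mul, inter_comm B S]
    _ = #(S ∩ B) * c := by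
        rw [sum_const, card_univ, ← hS, nsmul_eq_mul]
        rcases S.eq_empty_or_nonempty with rfl | hne
        · simp
        · field_simp

theorem sum_perm_apply_card_image_inter_div_le (A B : Finset α) (hA : #A = Fintype.card ι)
    {f : ℝ → ℝ} (hf : ConvexOn ℝ (Set.Ici 0) f) :
    (∑ π : Perm α, f #(A.image π ∩ B)) / (Fintype.card α).factorial
      ≤ (∑ y : ι → α, f #{t | y t ∈ B}) / (Fintype.card α : ℝ) ^ Fintype.card ι := by
  set c := ∑ y : ι → α, coverWeight A A y
  have hfactorial : (0 : ℝ) < (Fintype.card α).factorial := by positivity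
  have hpow : (0 : ℝ) < (Fintype.card α : ℝ) ^ Fintype.card ι := by
    exact_mod_cast Nat.pow_pos_iff.2 <| by
      have := hA ▸ card_le_univ A
      omega
  have hc : 0 < c := by
    rw [← factorial_mul_sum_coverWeight hA] at hpow
    exact pos_of_mul_pos_right hpow hfactorial.le
  have hjensen := hf.mul_sum_comp_le_sum_comp_of_mean (s := univ) (t := univ)
    (w := fun (π : Perm α) (y : ι → α) => coverWeight A (A.image π) y)
    (g := fun y : ι → α => (#{t | y t ∈ B} : ℝ)) (h := fun π : Perm α => (#(A.image π ∩ B) : ℝ))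
    hc (fun _ _ _ _ => coverWeight_nonneg _)
    (fun π _ => sum_coverWeight_image π) (fun y _ => sum_perm_coverWeight hA y)
    (fun π _ => by
      rw [sum_coverWeight_mul_card_filter_mem (by rw [card_image_of_injective _ π.injective, hA]),
        sum_coverWeight_image, mul_comm])
    (fun y _ => Set.mem_Ici.2 (Nat.cast_nonneg _))
  rw [← factorial_mul_sum_coverWeight hA, div_le_div_iff₀ hfactorial (by positivity)]
  linarith [mul_le_mul_of_nonneg_right hjensen hfactorial.le]

end Coupling

section Binomial

variable {α ι : Type*} [Fintype α] [DecidableEq α] [Fintype ι] [DecidableEq ι]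

theorem card_filter_mem_eq_pow_mul_pow (B : Finset α) (U : Finset ι) :
    #{y : ι → α | ({t | y t ∈ B} : Finset ι) = U} = #B ^ #U * #Bᶜ ^ #Uᶜ := by
  have hfiber : ({y : ι → α | ({t | y t ∈ B} : Finset ι) = U} : Finset (ι → α))
      = Fintype.piFinset fun t => if t ∈ U then B else Bᶜ := by
    ext y
    simp only [mem_filter, mem_univ, true_and, Fintype.mem_piFinset, Finset.ext_iff]
    refine forall_congr' fun t => ?_
    split_ifs with ht <;> simp [ht]
  simp [hfiber, apply_ite card, prod_ite, filter_notMem_eq_sdiff, compl_eq_univ_sdiff]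

theorem sum_pi_apply_card_filter_mem (B : Finset α) (f : ℕ → ℝ) :
    ∑ y : ι → α, f #{t | y t ∈ B} = ∑ k ∈ range (Fintype.card ι + 1),
      (Fintype.card ι).choose k * #B ^ k * #Bᶜ ^ (Fintype.card ι - k) * f k := by
  calc ∑ y : ι → α, f #{t | y t ∈ B}
      = ∑ U : Finset ι, #{y : ι → α | ({t | y t ∈ B} : Finset ι) = U} * f #U := by
        rw [← sum_fiberwise univ (fun y : ι → α => ({t | y t ∈ B} : Finset ι))]
        refine sum_congr rfl fun U _ => ?_
        rw [sum_congr rfl fun y hy => by rw [(mem_filter.1 hy).2], sum_const, nsmul_eq_mul]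
    _ = ∑ U ∈ (univ : Finset ι).powerset,
          (#B ^ #U * #Bᶜ ^ (Fintype.card ι - #U) * f #U : ℝ) := by
        simp [card_filter_mem_eq_pow_mul_pow, card_compl]
    _ = _ := by
        rw [sum_powerset_apply_card (fun k => (#B ^ k * #Bᶜ ^ (Fintype.card ι - k) * f k : ℝ))]
        simp [nsmul_eq_mul, mul_assoc]

theorem sum_pi_apply_card_filter_mem_div [Nonempty α] (B : Finset α) (f : ℕ → ℝ) :
    (∑ y : ι → α, f #{t | y t ∈ B}) / (Fintype.card α : ℝ) ^ Fintype.card ι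
      = ∑ k ∈ range (Fintype.card ι + 1), (Fintype.card ι).choose k
          * ((#B : ℝ) / Fintype.card α) ^ k
          * (1 - (#B : ℝ) / Fintype.card α) ^ (Fintype.card ι - k) * f k := by
  have hα : (Fintype.card α : ℝ) ≠ 0 := Nat.cast_ne_zero.2 Fintype.card_ne_zero
  have hcompl : 1 - (#B : ℝ) / Fintype.card α = #Bᶜ / Fintype.card α := by
    rw [card_compl, Nat.cast_sub (card_le_univ B)]
    field_simp
  rw [sum_pi_apply_card_filter_mem, sum_div]
  refine sum_congr rfl fun k hk => ?_
  have hpow : (Fintype.card α : ℝ) ^ Fintype.card ι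
      = Fintype.card α ^ k * Fintype.card α ^ (Fintype.card ι - k) := by
    rw [← pow_add, Nat.add_sub_cancel' (Nat.lt_succ_iff.1 (mem_range.1 hk))]
  rw [hcompl, div_pow, div_pow, hpow]
  field_simp

end Binomial

theorem stmt19_general (n s : ℕ) (hn : 0 < n)
    (A B : Finset (Fin n)) (hA : A.card = s) (hB : B.card = s) :
    (∀ f : ℝ → ℝ, Continuous f → ConvexOn ℝ Set.univ f →
      (∑ π : Equiv.Perm (Fin n), f ((((A.image π) ∩ B).card : ℝ))) / (n.factorial : ℝ)
        ≤ ∑ k ∈ Finset.range (s + 1),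
            (s.choose k : ℝ) * ((s : ℝ) / n) ^ k * (1 - (s : ℝ) / n) ^ (s - k) * f k)
    ∧ ∀ l : ℝ,
      (∑ π : Equiv.Perm (Fin n), Real.exp (l * (((A.image π) ∩ B).card : ℝ)))
          / (n.factorial : ℝ)
        ≤ ∑ k ∈ Finset.range (s + 1),
            (s.choose k : ℝ) * ((s : ℝ) / n) ^ k * (1 - (s : ℝ) / n) ^ (s - k)
              * Real.exp (l * k) := by
  have : NeZero n := ⟨hn.ne'⟩
  have hconvex (f : ℝ → ℝ) (hf : ConvexOn ℝ Set.univ f) :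
      (∑ π : Equiv.Perm (Fin n), f ((((A.image π) ∩ B).card : ℝ))) / (n.factorial : ℝ)
        ≤ ∑ k ∈ Finset.range (s + 1),
            (s.choose k : ℝ) * ((s : ℝ) / n) ^ k * (1 - (s : ℝ) / n) ^ (s - k) * f k := by
    have hle := sum_perm_apply_card_image_inter_div_le (ι := Fin s) A B (by simp [hA])
      (hf.subset (Set.subset_univ _) (convex_Ici 0))
    rw [sum_pi_apply_card_filter_mem_div B fun k => f k] at hle
    simpa [hB] using hle
  refine ⟨fun f _ hf => hconvex f hf, fun l => hconvex (fun x => Real.exp (l * x)) ?_⟩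
  exact convexOn_exp.comp_linearMap (LinearMap.mul ℝ ℝ l)

theorem stmt19 (n s : ℕ) (hs : s ≤ n) (hn : 0 < n)
    (A B : Finset (Fin n)) (hA : A.card = s) (hB : B.card = s) :
    (∀ f : ℝ → ℝ, Continuous f → ConvexOn ℝ Set.univ f →
      (∑ π : Equiv.Perm (Fin n), f ((((A.image π) ∩ B).card : ℝ))) / (n.factorial : ℝ)
        ≤ ∑ k ∈ Finset.range (s + 1),
            (s.choose k : ℝ) * ((s : ℝ) / n) ^ k * (1 - (s : ℝ) / n) ^ (s - k) * f k)
    ∧ ∀ l : ℝ,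
      (∑ π : Equiv.Perm (Fin n), Real.exp (l * (((A.image π) ∩ B).card : ℝ)))
          / (n.factorial : ℝ)
        ≤ ∑ k ∈ Finset.range (s + 1),
            (s.choose k : ℝ) * ((s : ℝ) / n) ^ k * (1 - (s : ℝ) / n) ^ (s - k)
              * Real.exp (l * k) :=
  stmt19_general n s hn A B hA hB
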